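/- arXiv:2408.06801 — 7 statements merged into one kernel-verified Lean document; each statement's English description precedes it below -/
import Mathlib

section
/- Weighted Poincaré inequality: For every function f : [0,1] → ℝ (absolutely continuous on compact subintervals of (0,1)) with ∫₀¹ y(1−y)|f′(y)|² dy < +∞, one has ∫₀¹ |f(y) − ∫₀¹ f(z) dz|² dy ≤ (1/2) ∫₀¹ y(1−y)|f′(y)|² dy; equivalently, ∫₀¹ f(y)² dy − (∫₀¹ f(y) dy)² ≤ (1/2) ∫₀¹ y(1−y)|f′(y)|² dy. -/
open MeasureTheory intervalIntegral Set Filter Topology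

/-!
Write `w t = t (1 - t)`, let `g = f - ∫ f` and `u t = ∫₀ᵗ g`, and put
`Φ = 2 g u - (1 - 2t) u² / w`. On `(0, 1)` the difference `Φ' - (g² - w f'² / 2)` is the sum of
squares `(g - (1 - 2t) u / w)² + (w f' + 2u)² / (2w)`, and since `|u| ≤ 2 sup |g| · w` the function
`Φ` is continuous on `[0, 1]` and vanishes at both ends. Hence `∫ (g² - w f'² / 2) ≤ Φ 1 - Φ 0 = 0`.
This single calibration packages the integration by parts `∫ g² = -∫ f' u`, the Hardy inequality
`2 ∫ u² / w ≤ ∫ g²` and the AM-GM step `-f' u ≤ w f'² / 4 + u² / w`.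
-/

theorem abs_primitive_le_of_integral_eq_zero {g : ℝ → ℝ} {M : ℝ}
    (hg : IntervalIntegrable g volume 0 1) (hmean : ∫ s in (0:ℝ)..1, g s = 0)
    (hM : ∀ s ∈ Icc (0:ℝ) 1, ‖g s‖ ≤ M) {t : ℝ} (ht : t ∈ Icc (0:ℝ) 1) :
    |∫ s in (0:ℝ)..t, g s| ≤ 2 * M * (t * (1 - t)) := by
  have hleft : |∫ s in (0:ℝ)..t, g s| ≤ M * t := by
    simpa [abs_of_nonneg ht.1] using norm_integral_le_of_norm_le_const (a := 0) (b := t)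
      fun s hs => hM s (uIoc_subset_uIcc.trans
        (by rw [uIcc_of_le ht.1]; exact Icc_subset_Icc le_rfl ht.2) hs)
  have hright : |∫ s in (0:ℝ)..t, g s| ≤ M * (1 - t) := by
    have hsplit := integral_add_adjacent_intervals
      (hg.mono_set (uIcc_subset_uIcc_left (by simpa [uIcc_of_le] using ht)))
      (hg.mono_set (uIcc_subset_uIcc_right (by simpa [uIcc_of_le] using ht)))
    rw [hmean, add_eq_zero_iff_eq_neg] at hsplit
    rw [hsplit, abs_neg]
    simpa [abs_of_nonneg (sub_nonneg.2 ht.2)] using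
      norm_integral_le_of_norm_le_const (a := t) (b := 1) fun s hs => hM s (uIoc_subset_uIcc.trans
        (by rw [uIcc_of_le ht.2]; exact Icc_subset_Icc ht.1 le_rfl) hs)
  nlinarith [mul_le_mul_of_nonneg_left hleft (sub_nonneg.2 ht.2),
    mul_le_mul_of_nonneg_left hright ht.1]

theorem hasDerivAt_primitive_of_continuousOn {g : ℝ → ℝ} {a b t : ℝ}
    (hg : ContinuousOn g (Icc a b)) (ht : t ∈ Ioo a b) :
    HasDerivAt (fun x => ∫ s in a..x, g s) (g t) t :=
  integral_hasDerivAt_right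
    ((hg.mono (Icc_subset_Icc le_rfl ht.2.le)).intervalIntegrable_of_Icc ht.1.le)
    ((hg.mono Ioo_subset_Icc_self).stronglyMeasurableAtFilter isOpen_Ioo t ht)
    (hg.continuousAt (Icc_mem_nhds ht.1 ht.2))

/-- At `t = 0` and `t = 1` the division by zero returns `0`, which is also the limit whenever
`u = O(t (1 - t))`. -/
noncomputable def hardyPotential (u : ℝ → ℝ) (t : ℝ) : ℝ :=
  (1 - 2 * t) * u t ^ 2 / (t * (1 - t))

theorem abs_hardyPotential_le {u : ℝ → ℝ} {C t : ℝ} (ht : t ∈ Icc (0:ℝ) 1)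
    (hu : |u t| ≤ C * (t * (1 - t))) : |hardyPotential u t| ≤ C ^ 2 * (t * (1 - t)) := by
  rcases (mul_nonneg ht.1 (sub_nonneg.2 ht.2)).eq_or_lt with hw | hw
  · simp [hardyPotential, ← hw]
  · have h12 : |1 - 2 * t| ≤ 1 := abs_le.2 ⟨by linarith [ht.2], by linarith [ht.1]⟩
    rw [hardyPotential, abs_div, abs_mul, abs_of_pos hw, div_le_iff₀ hw, abs_pow]
    have : |u t| ^ 2 ≤ (C * (t * (1 - t))) ^ 2 := pow_le_pow_left₀ (abs_nonneg _) hu 2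
    nlinarith [abs_nonneg (1 - 2 * t), sq_nonneg (u t)]

theorem continuousOn_hardyPotential {u : ℝ → ℝ} {C : ℝ} (hu : ContinuousOn u (Icc 0 1))
    (hC : ∀ t ∈ Icc (0:ℝ) 1, |u t| ≤ C * (t * (1 - t))) :
    ContinuousOn (hardyPotential u) (Icc 0 1) := by
  intro t ht
  rcases eq_or_ne (t * (1 - t)) 0 with hw | hw
  · have h0 : hardyPotential u t = 0 := by simp [hardyPotential, hw]
    have hlim : Tendsto (fun s : ℝ => C ^ 2 * (s * (1 - s))) (𝓝[Icc 0 1] t) (𝓝 0) := by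
      have hcont : Continuous fun s : ℝ => C ^ 2 * (s * (1 - s)) := by fun_prop
      simpa [hw] using (hcont.tendsto t).mono_left nhdsWithin_le_nhds
    rw [ContinuousWithinAt, h0]
    refine squeeze_zero_norm' ?_ hlim
    filter_upwards [self_mem_nhdsWithin] with s hs using abs_hardyPotential_le hs (hC s hs)
  · exact ((continuousWithinAt_const.sub (continuousWithinAt_id.const_mul 2)).mul
      ((hu t ht).pow 2)).div
      (continuousWithinAt_id.mul (continuousWithinAt_const.sub continuousWithinAt_id)) hw

theorem hasDerivAt_hardyPotential {u : ℝ → ℝ} {v t : ℝ} (hu : HasDerivAt u v t)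
    (ht : t * (1 - t) ≠ 0) :
    HasDerivAt (hardyPotential u)
      (2 * (1 - 2 * t) * u t * v / (t * (1 - t))
        - (t ^ 2 + (1 - t) ^ 2) * u t ^ 2 / (t * (1 - t)) ^ 2) t := by
  have hnum := ((hasDerivAt_id t).const_mul 2 |>.const_sub 1).mul (hu.pow 2)
  have hden := (hasDerivAt_id t).mul ((hasDerivAt_id t).const_sub 1)
  refine (hnum.div hden ht).congr_deriv ?_
  simp only [id, Pi.mul_apply, Pi.pow_apply]
  field_simp
  ring

theorem weighted_poincare_of_integral_eq_zero {f f' : ℝ → ℝ} (hcont : ContinuousOn f (Icc 0 1))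
    (hderiv : ∀ y ∈ Ioo (0:ℝ) 1, HasDerivAt f (f' y) y)
    (hwint : IntegrableOn (fun y => y * (1 - y) * f' y ^ 2) (Ioo 0 1))
    (hmean : ∫ y in (0:ℝ)..1, f y = 0) :
    ∫ y in (0:ℝ)..1, f y ^ 2 ≤ 1 / 2 * ∫ y in (0:ℝ)..1, y * (1 - y) * f' y ^ 2 := by
  set u : ℝ → ℝ := fun t => ∫ s in (0:ℝ)..t, f s
  have hfi : IntervalIntegrable f volume 0 1 := hcont.intervalIntegrable_of_Icc zero_le_one
  obtain ⟨M, hM⟩ := isCompact_Icc.exists_bound_of_continuousOn hcont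
  have hucont : ContinuousOn u (Icc 0 1) := by
    simpa [uIcc_of_le] using continuousOn_primitive_interval' hfi left_mem_uIcc
  have hu : ∀ t ∈ Ioo (0:ℝ) 1, HasDerivAt u (f t) t := fun t ht =>
    hasDerivAt_primitive_of_continuousOn hcont ht
  set Φ : ℝ → ℝ := fun t => 2 * (f t * u t) - hardyPotential u t
  set Φ' : ℝ → ℝ := fun t => 2 * (f' t * u t + f t * f t) -
    (2 * (1 - 2 * t) * u t * f t / (t * (1 - t))
      - (t ^ 2 + (1 - t) ^ 2) * u t ^ 2 / (t * (1 - t)) ^ 2)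
  have hΦcont : ContinuousOn Φ (Icc 0 1) :=
    (continuousOn_const.mul (hcont.mul hucont)).sub (continuousOn_hardyPotential hucont
      fun t ht => abs_primitive_le_of_integral_eq_zero hfi hmean hM ht)
  have hΦ : ∀ t ∈ Ioo (0:ℝ) 1, HasDerivAt Φ (Φ' t) t := fun t ht =>
    (((hderiv t ht).mul (hu t ht)).const_mul 2).sub
      (hasDerivAt_hardyPotential (hu t ht) (mul_pos ht.1 (sub_pos.2 ht.2)).ne')
  have hφ : ∀ t ∈ Ioo (0:ℝ) 1, f t ^ 2 - 1 / 2 * (t * (1 - t) * f' t ^ 2) ≤ Φ' t := by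
    intro t ht
    have ht0 : t ≠ 0 := ht.1.ne'
    have ht1 : 1 - t ≠ 0 := (sub_pos.2 ht.2).ne'
    have hsos : Φ' t - (f t ^ 2 - 1 / 2 * (t * (1 - t) * f' t ^ 2))
        = (f t - (1 - 2 * t) * u t / (t * (1 - t))) ^ 2
          + (t * (1 - t) * f' t + 2 * u t) ^ 2 / (2 * (t * (1 - t))) := by
      simp only [Φ']
      field_simp
      ring
    rw [← sub_nonneg, hsos]
    exact add_nonneg (sq_nonneg _) (div_nonneg (sq_nonneg _) (by nlinarith [ht.1, ht.2]))
  have hf2i : IntervalIntegrable (fun y => f y ^ 2) volume 0 1 :=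
    (hcont.pow 2).intervalIntegrable_of_Icc zero_le_one
  have hwi : IntervalIntegrable (fun y => y * (1 - y) * f' y ^ 2) volume 0 1 :=
    (intervalIntegrable_iff_integrableOn_Ioo_of_le zero_le_one).2 hwint
  have hle := integral_le_sub_of_hasDeriv_right_of_le zero_le_one hΦcont
    (fun t ht => (hΦ t ht).hasDerivWithinAt)
    ((intervalIntegrable_iff_integrableOn_Icc_of_le zero_le_one).1 (hf2i.sub (hwi.const_mul _)))
    hφ
  have hΦ0 : Φ 0 = 0 := by simp [Φ, u, hardyPotential]
  have hΦ1 : Φ 1 = 0 := by simp [Φ, u, hardyPotential, hmean]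
  rw [integral_sub hf2i (hwi.const_mul _), intervalIntegral.integral_const_mul, hΦ0, hΦ1] at hle
  linarith

theorem integral_sub_integral_sq_eq {f : ℝ → ℝ} (hf : IntervalIntegrable f volume 0 1)
    (hf2 : IntervalIntegrable (fun y => f y ^ 2) volume 0 1) :
    ∫ y in (0:ℝ)..1, (f y - ∫ z in (0:ℝ)..1, f z) ^ 2
      = (∫ y in (0:ℝ)..1, f y ^ 2) - (∫ y in (0:ℝ)..1, f y) ^ 2 := by
  set m := ∫ z in (0:ℝ)..1, f z
  have hexp : ∀ y, (f y - m) ^ 2 = f y ^ 2 - 2 * m * f y + m ^ 2 := fun y => by ring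
  simp only [hexp]
  rw [integral_add (hf2.sub (hf.const_mul _)) intervalIntegrable_const,
    integral_sub hf2 (hf.const_mul _), intervalIntegral.integral_const_mul]
  simp
  ring

theorem weighted_poincare_general
    (f f' : ℝ → ℝ)
    (hcont : ContinuousOn f (Set.Icc 0 1))
    (hderiv : ∀ y ∈ Set.Ioo (0:ℝ) 1, HasDerivAt f (f' y) y)
    (hwint : IntegrableOn (fun y => y * (1 - y) * (f' y) ^ 2) (Set.Ioo 0 1) volume) :
    (∫ y in (0:ℝ)..1, (f y - ∫ z in (0:ℝ)..1, f z) ^ 2)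
      ≤ (1 / 2) * ∫ y in (0:ℝ)..1, y * (1 - y) * (f' y) ^ 2
    ∧ (∫ y in (0:ℝ)..1, (f y) ^ 2) - (∫ y in (0:ℝ)..1, f y) ^ 2
      ≤ (1 / 2) * ∫ y in (0:ℝ)..1, y * (1 - y) * (f' y) ^ 2 := by
  have hf : IntervalIntegrable f volume 0 1 := hcont.intervalIntegrable_of_Icc zero_le_one
  have hmean : ∫ y in (0:ℝ)..1, (f y - ∫ z in (0:ℝ)..1, f z) = 0 := by
    simp [integral_sub hf intervalIntegrable_const]
  have hvar := weighted_poincare_of_integral_eq_zero (hcont.sub continuousOn_const)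
    (fun y hy => (hderiv y hy).sub_const _) hwint hmean
  refine ⟨hvar, ?_⟩
  rwa [← integral_sub_integral_sq_eq hf ((hcont.pow 2).intervalIntegrable_of_Icc zero_le_one)]

/-- Weighted Poincaré inequality (Lemma 4.1). -/
theorem weighted_poincare
    (f f' : ℝ → ℝ)
    (hcont : ContinuousOn f (Set.Icc 0 1))
    (hderiv : ∀ y ∈ Set.Ioo (0:ℝ) 1, HasDerivAt f (f' y) y)
    (hfint : IntervalIntegrable f volume 0 1)
    (hf2int : IntervalIntegrable (fun y => (f y) ^ 2) volume 0 1)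
    (hwint : IntegrableOn (fun y => y * (1 - y) * (f' y) ^ 2) (Set.Ioo 0 1) volume) :
    (∫ y in (0:ℝ)..1, (f y - ∫ z in (0:ℝ)..1, f z) ^ 2)
      ≤ (1 / 2) * ∫ y in (0:ℝ)..1, y * (1 - y) * (f' y) ^ 2
    ∧ (∫ y in (0:ℝ)..1, (f y) ^ 2) - (∫ y in (0:ℝ)..1, f y) ^ 2
      ≤ (1 / 2) * ∫ y in (0:ℝ)..1, y * (1 - y) * (f' y) ^ 2 :=
  weighted_poincare_general f f' hcont hderiv hwint
end

section
/- Characterization of Oleinik-admissible shocks for the cubic flux: Let f(u) = u³, let u_- < 0 and u_+ ≠ u_-, and set σ := (f(u_+) − f(u_-))/(u_+ − u_-) = u_+² + u_+u_- + u_-². Then the Oleinik entropy condition 'σ ≤ (f(u) − f(u_-))/(u − u_-) for all u strictly between u_- and u_+' holds if and only if u_- < u_+ ≤ −u_- /2. -/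
/-! The chord slope of `u ↦ u³` from `u₋` to `u` is `u² + u u₋ + u₋²`, so the Oleinik inequality at
`u` reads `(u - u₊)(u + u₊ + u₋) ≥ 0`. For `u₊ < u₋ < 0` the first factor is positive and the second
negative on all of `(u₊, u₋)`, so no such shock is admissible. For `u₋ < u₊` the first factor is
negative, and the condition becomes `u + u₊ + u₋ ≤ 0` on `(u₋, u₊)`, i.e. `2u₊ + u₋ ≤ 0`. -/

lemma cube_sub_cube_div_sub {K : Type*} [Field K] {a b : K} (h : a ≠ b) :
    (a ^ 3 - b ^ 3) / (a - b) = a ^ 2 + a * b + b ^ 2 := by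
  field_simp [sub_ne_zero.mpr h]
  ring

lemma forall_lt_lt_imp_le_iff {α : Type*} [LinearOrder α] [DenselyOrdered α] {a b c : α}
    (hab : a < b) : (∀ u, a < u → u < b → u ≤ c) ↔ b ≤ c := by
  refine ⟨fun h => le_of_not_gt fun hcb => ?_, fun hbc u _ hub => hub.le.trans hbc⟩
  obtain ⟨u, hu, hub⟩ := exists_between (max_lt hab hcb)
  exact (max_lt_iff.mp hu).2.not_ge (h u (max_lt_iff.mp hu).1 hub)

lemma sq_add_mul_add_sq_le_cube_slope_iff {m p u : ℝ} (hu : u ≠ m) :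
    p ^ 2 + p * m + m ^ 2 ≤ (u ^ 3 - m ^ 3) / (u - m) ↔ 0 ≤ (u - p) * (u + p + m) := by
  rw [cube_sub_cube_div_sub hu, ← sub_nonneg]
  ring_nf

lemma mul_add_add_neg_of_lt_of_lt {m p u : ℝ} (hm : m < 0) (hpu : p < u) (hum : u < m) :
    (u - p) * (u + p + m) < 0 :=
  mul_neg_of_pos_of_neg (sub_pos.mpr hpu) (by linarith)

lemma forall_mul_add_add_nonneg_iff {m p : ℝ} (hmp : m < p) :
    (∀ u, m < u → u < p → 0 ≤ (u - p) * (u + p + m)) ↔ p ≤ -m / 2 := by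
  have hfactor : ∀ u, u < p → (0 ≤ (u - p) * (u + p + m) ↔ u ≤ -p - m) := fun u hup => by
    rw [show (u - p) * (u + p + m) = (p - u) * (-p - m - u) by ring,
      mul_nonneg_iff_of_pos_left (sub_pos.mpr hup), sub_nonneg]
  calc (∀ u, m < u → u < p → 0 ≤ (u - p) * (u + p + m))
      ↔ ∀ u, m < u → u < p → u ≤ -p - m :=
        forall_congr' fun u => imp_congr_right fun _ => forall_congr' fun hup => hfactor u hup
    _ ↔ p ≤ -p - m := forall_lt_lt_imp_le_iff hmp
    _ ↔ p ≤ -m / 2 := by constructor <;> intro h <;> linarith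

/-- Characterization of Oleinik-admissible shocks for the cubic flux `f(u) = u³`. -/
theorem oleinik_admissible_iff
    (uminus uplus : ℝ) (h₁ : uminus < 0) (h₂ : uplus ≠ uminus)
    (σ : ℝ) (hσ : σ = (uplus ^ 3 - uminus ^ 3) / (uplus - uminus)) :
    (∀ u : ℝ, min uminus uplus < u → u < max uminus uplus →
        σ ≤ (u ^ 3 - uminus ^ 3) / (u - uminus))
      ↔ (uminus < uplus ∧ uplus ≤ -uminus / 2) := by
  rw [hσ, cube_sub_cube_div_sub h₂]
  rcases h₂.lt_or_gt with hpm | hmp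
  · refine iff_of_false (fun h => ?_) fun h => hpm.not_gt h.1
    rw [min_eq_right hpm.le, max_eq_left hpm.le] at h
    obtain ⟨u, hpu, hum⟩ := exists_between hpm
    have hadm := (sq_add_mul_add_sq_le_cube_slope_iff hum.ne).mp (h u hpu hum)
    exact hadm.not_gt (mul_add_add_neg_of_lt_of_lt h₁ hpu hum)
  · rw [min_eq_left hmp.le, max_eq_right hmp.le, ← forall_mul_add_add_nonneg_iff hmp]
    simp only [hmp, true_and]
    exact forall_congr' fun u => imp_congr_right fun hmu => forall_congr' fun _ =>
      sq_add_mul_add_sq_le_cube_slope_iff hmu.ne'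
end

section
/- Exponential tail bounds for the approximate rarefaction wave (Lemma 2.2, part (4)): There exists a constant C > 0 such that for all t ≥ 0: |u^R(t,x) − u_+| ≤ C δ_R e^{−2|x − λ_+ t|} for all x ≥ λ_+ t, and |u^R(t,x) − u_m| ≤ C δ_R e^{−2|x − λ_m t|} for all x ≤ λ_m t. -/
/-!
Along the characteristic through `(t, x)` the wave speed `w₀(x₀)` lies between `λ_m` and `λ_+`,
so `x ≥ λ_+ t` forces the foot `x₀ ≥ x - λ_+ t ≥ 0`, and `x ≤ λ_m t` forces `x₀ ≤ x - λ_m t ≤ 0`.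
The profile `w₀` approaches its end states exponentially, `λ_+ - w₀(y) ≤ (λ_+ - λ_m) e^{-2y}` and
`w₀(y) - λ_m ≤ (λ_+ - λ_m) e^{2y}`, and `√(·/3)` is `1/(2u_m)`-Lipschitz on `[u_m², ∞)`, which
contains the whole range of `w₀/3`. Since `λ_+ - λ_m = 3(u_+ + u_m) δ_R`, both tails hold with
`C = (u_+ + u_m) / (2 u_m)`.
-/

open Real Set

theorem Real.one_sub_tanh_le_two_mul_exp (y : ℝ) : 1 - tanh y ≤ 2 * exp (-2 * y) := by
  have hc := cosh_pos y
  have hquot : 1 - tanh y = exp (-y) / cosh y := by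
    rw [tanh_eq_sinh_div_cosh, eq_div_iff hc.ne', sub_mul, one_mul, div_mul_cancel₀ _ hc.ne',
      ← cosh_sub_sinh]
  have hcosh : exp y / 2 ≤ cosh y := by rw [cosh_eq]; linarith [exp_pos (-y)]
  have hexp : exp (-2 * y) * exp y = exp (-y) := by rw [← exp_add]; ring_nf
  rw [hquot, div_le_iff₀ hc]
  calc exp (-y) = 2 * exp (-2 * y) * (exp y / 2) := by rw [← hexp]; ring
    _ ≤ 2 * exp (-2 * y) * cosh y := by gcongr

theorem Real.one_add_tanh_le_two_mul_exp (y : ℝ) : 1 + tanh y ≤ 2 * exp (2 * y) := by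
  simpa [tanh_neg] using one_sub_tanh_le_two_mul_exp (-y)

theorem Real.abs_sqrt_sub_sqrt_le {m a b : ℝ} (hm : 0 < m) (ha : m ^ 2 ≤ a) (hb : m ^ 2 ≤ b) :
    |√a - √b| ≤ |a - b| / (2 * m) := by
  have hma : m ≤ √a := le_sqrt_of_sq_le ha
  have hmb : m ≤ √b := le_sqrt_of_sq_le hb
  have hdiff : a - b = (√a - √b) * (√a + √b) := by
    linear_combination -sq_sqrt ((sq_nonneg m).trans ha) + sq_sqrt ((sq_nonneg m).trans hb)
  rw [le_div_iff₀ (by positivity), hdiff, abs_mul, abs_of_pos (by linarith : 0 < √a + √b)]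
  gcongr
  linarith

/-- The paper's `w₀` is `tanhProfile λ_m λ_+`. -/
noncomputable def tanhProfile (a b y : ℝ) : ℝ := (b + a) / 2 + (b - a) / 2 * tanh y

section TanhProfile

variable {a b : ℝ}

theorem tanhProfile_mem_Icc (hab : a ≤ b) (y : ℝ) : tanhProfile a b y ∈ Icc a b := by
  unfold tanhProfile
  constructor <;> nlinarith [tanh_lt_one y, neg_one_lt_tanh y]

theorem sub_tanhProfile_le (hab : a ≤ b) (y : ℝ) :
    b - tanhProfile a b y ≤ (b - a) * exp (-2 * y) :=
  calc b - tanhProfile a b y = (b - a) / 2 * (1 - tanh y) := by unfold tanhProfile; ring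
    _ ≤ (b - a) / 2 * (2 * exp (-2 * y)) := by
      gcongr
      exact one_sub_tanh_le_two_mul_exp y
    _ = (b - a) * exp (-2 * y) := by ring

theorem tanhProfile_sub_le (hab : a ≤ b) (y : ℝ) :
    tanhProfile a b y - a ≤ (b - a) * exp (2 * y) :=
  calc tanhProfile a b y - a = (b - a) / 2 * (1 + tanh y) := by unfold tanhProfile; ring
    _ ≤ (b - a) / 2 * (2 * exp (2 * y)) := by
      gcongr
      exact one_add_tanh_le_two_mul_exp y
    _ = (b - a) * exp (2 * y) := by ring

end TanhProfile

section SqrtTanhProfile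

variable {um up : ℝ}

theorem abs_sqrt_tanhProfile_sub_right_le (hum : 0 < um) (hup : um ≤ up) (y : ℝ) :
    |√(tanhProfile (3 * um ^ 2) (3 * up ^ 2) y / 3) - up| ≤
      (up + um) / (2 * um) * (up - um) * exp (-2 * y) := by
  have hab : 3 * um ^ 2 ≤ 3 * up ^ 2 := by nlinarith
  obtain ⟨hlo, hhi⟩ := tanhProfile_mem_Icc hab y
  set w := tanhProfile (3 * um ^ 2) (3 * up ^ 2) y
  have hlip := abs_sqrt_sub_sqrt_le hum (a := w / 3) (b := up ^ 2) (by linarith) (by nlinarith)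
  rw [sqrt_sq (by linarith), abs_of_nonpos (by linarith : w / 3 - up ^ 2 ≤ 0)] at hlip
  calc _ ≤ -(w / 3 - up ^ 2) / (2 * um) := hlip
    _ ≤ (up ^ 2 - um ^ 2) * exp (-2 * y) / (2 * um) := by
      gcongr
      linarith [sub_tanhProfile_le hab y]
    _ = _ := by field_simp; ring

theorem abs_sqrt_tanhProfile_sub_left_le (hum : 0 < um) (hup : um ≤ up) (y : ℝ) :
    |√(tanhProfile (3 * um ^ 2) (3 * up ^ 2) y / 3) - um| ≤
      (up + um) / (2 * um) * (up - um) * exp (2 * y) := by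
  have hab : 3 * um ^ 2 ≤ 3 * up ^ 2 := by nlinarith
  obtain ⟨hlo, hhi⟩ := tanhProfile_mem_Icc hab y
  set w := tanhProfile (3 * um ^ 2) (3 * up ^ 2) y
  have hlip := abs_sqrt_sub_sqrt_le hum (a := w / 3) (b := um ^ 2) (by linarith) le_rfl
  rw [sqrt_sq hum.le, abs_of_nonneg (by linarith : 0 ≤ w / 3 - um ^ 2)] at hlip
  calc _ ≤ (w / 3 - um ^ 2) / (2 * um) := hlip
    _ ≤ (up ^ 2 - um ^ 2) * exp (2 * y) / (2 * um) := by
      gcongr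
      linarith [tanhProfile_sub_le hab y]
    _ = _ := by field_simp; ring

end SqrtTanhProfile

/-- Exponential tail bounds for the approximate rarefaction wave (Lemma 2.2, part (4)). -/
theorem rarefaction_exponential_tails
    (um up lm lp dR : ℝ) (h0 : 0 < um) (hup : um < up)
    (hlm : lm = 3 * um ^ 2) (hlp : lp = 3 * up ^ 2) (hdR : dR = up - um)
    (w0 : ℝ → ℝ) (hw0 : ∀ x, w0 x = (lp + lm) / 2 + (lp - lm) / 2 * Real.tanh x)
    (x0 : ℝ → ℝ → ℝ) (hx0 : ∀ t, 0 ≤ t → ∀ x, x = x0 t x + w0 (x0 t x) * t)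
    (uR : ℝ → ℝ → ℝ) (huR : ∀ t x, uR t x = Real.sqrt (w0 (x0 t x) / 3)) :
    ∃ C > 0, ∀ t : ℝ, 0 ≤ t →
      (∀ x : ℝ, lp * t ≤ x → |uR t x - up| ≤ C * dR * Real.exp (-2 * |x - lp * t|)) ∧
      (∀ x : ℝ, x ≤ lm * t → |uR t x - um| ≤ C * dR * Real.exp (-2 * |x - lm * t|)) := by
  have hw : w0 = tanhProfile lm lp := funext hw0
  subst hw hlm hlp hdR
  have hup0 : 0 < up := h0.trans hup
  have hspeed := tanhProfile_mem_Icc (by nlinarith : 3 * um ^ 2 ≤ 3 * up ^ 2)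
  refine ⟨(up + um) / (2 * um), by positivity, fun t ht => ⟨fun x hx => ?_, fun x hx => ?_⟩⟩
  · have hfoot : x - 3 * up ^ 2 * t ≤ x0 t x := by
      nlinarith [hx0 t ht x, (hspeed (x0 t x)).2]
    rw [huR, abs_of_nonneg (sub_nonneg.2 hx)]
    refine (abs_sqrt_tanhProfile_sub_right_le h0 hup.le _).trans ?_
    exact mul_le_mul_of_nonneg_left (exp_le_exp.2 (by linarith)) (by positivity)
  · have hfoot : x0 t x ≤ x - 3 * um ^ 2 * t := by
      nlinarith [hx0 t ht x, (hspeed (x0 t x)).1]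
    rw [huR, abs_of_nonpos (sub_nonpos.2 hx)]
    refine (abs_sqrt_tanhProfile_sub_left_le h0 hup.le _).trans ?_
    exact mul_le_mul_of_nonneg_left (exp_le_exp.2 (by linarith)) (by positivity)
end

section
/- Regularity and bounds for the weight function: The piecewise-defined function w is twice continuously differentiable on (u_-, u_m) (in particular the one-sided values of w, w′, w″ match at s = 0 and at s = u_m/2), and for all s ∈ (u_-, u_m): (15/8)u_m² ≤ w(s) < (15/2)u_m², −(5/2)u_m ≤ w′(s) ≤ 0, and 0 ≤ w″(s) ≤ 15/2. -/
/-!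
Each of the three pieces is a polynomial, and at both break points `0` and `u_m / 2` the
adjacent pieces agree together with their first two derivatives, so gluing them yields a
`C²` function. The bounds reduce to polynomial inequalities on each piece: the middle piece
decreases from `5/2 u_m²` to `15/8 u_m²`, with slope between `-5/2 u_m` and `0` and curvature
`60 s (u_m - 2 s) / u_m²`, which is largest at `s = u_m / 4`.
-/

open Set

def HasSecondDerivs (f f' f'' : ℝ → ℝ) : Prop :=
  (∀ x, HasDerivAt f (f' x) x) ∧ (∀ x, HasDerivAt f' (f'' x) x) ∧ Continuous f''

lemma hasDerivAt_ite_lt {f g f' g' : ℝ → ℝ} {a : ℝ}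
    (hf : ∀ x, HasDerivAt f (f' x) x) (hg : ∀ x, HasDerivAt g (g' x) x)
    (h₀ : f a = g a) (h₁ : f' a = g' a) (x : ℝ) :
    HasDerivAt (fun y => if y < a then f y else g y) (if x < a then f' x else g' x) x := by
  rcases lt_trichotomy x a with hx | rfl | hx
  · rw [if_pos hx]
    refine (hf x).congr_of_eventuallyEq ?_
    filter_upwards [Iio_mem_nhds hx] with y (hy : y < a)
    rw [if_pos hy]
  · rw [if_neg (lt_irrefl x)]
    have hleft : HasDerivWithinAt (fun y => if y < x then f y else g y) (g' x) (Iic x) x := by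
      refine (h₁ ▸ hf x).hasDerivWithinAt.congr (fun y hy => ?_) (by simp [h₀])
      rcases (mem_Iic.1 hy).lt_or_eq with hy | rfl
      · rw [if_pos hy]
      · simp [h₀]
    have hright : HasDerivWithinAt (fun y => if y < x then f y else g y) (g' x) (Ici x) x :=
      (hg x).hasDerivWithinAt.congr (fun y hy => if_neg (not_lt.2 hy)) (if_neg (lt_irrefl x))
    simpa only [Iic_union_Ici, hasDerivWithinAt_univ] using hleft.union hright
  · rw [if_neg hx.not_gt]
    refine (hg x).congr_of_eventuallyEq ?_
    filter_upwards [Ioi_mem_nhds hx] with y hy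
    rw [if_neg hy.not_gt]

namespace HasSecondDerivs

variable {f f' f'' : ℝ → ℝ}

lemma ite {g g' g'' : ℝ → ℝ} (hf : HasSecondDerivs f f' f'') (hg : HasSecondDerivs g g' g'')
    {a : ℝ} (h₀ : f a = g a) (h₁ : f' a = g' a) (h₂ : f'' a = g'' a) :
    HasSecondDerivs (fun x => if x < a then f x else g x) (fun x => if x < a then f' x else g' x)
      (fun x => if x < a then f'' x else g'' x) := by
  refine ⟨hasDerivAt_ite_lt hf.1 hg.1 h₀ h₁, hasDerivAt_ite_lt hf.2.1 hg.2.1 h₁ h₂, ?_⟩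
  simp only [← not_le, ite_not]
  exact hg.2.2.if_le hf.2.2 continuous_const continuous_id fun x hx => hx ▸ h₂.symm

lemma deriv_eq (hf : HasSecondDerivs f f' f'') : deriv f = f' :=
  funext fun x => (hf.1 x).deriv

lemma deriv_deriv_eq (hf : HasSecondDerivs f f' f'') : deriv (deriv f) = f'' := by
  rw [hf.deriv_eq]
  exact funext fun x => (hf.2.1 x).deriv

lemma contDiff (hf : HasSecondDerivs f f' f'') : ContDiff ℝ 2 f := by
  rw [show (2 : WithTop ℕ∞) = 1 + 1 from rfl, contDiff_succ_iff_deriv, contDiff_one_iff_deriv,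
    hf.deriv_deriv_eq, hf.deriv_eq]
  exact ⟨fun x => (hf.1 x).differentiableAt, by simp, fun x => (hf.2.1 x).differentiableAt, hf.2.2⟩

end HasSecondDerivs

lemma hasSecondDerivs_const (c : ℝ) : HasSecondDerivs (fun _ => c) (fun _ => 0) (fun _ => 0) :=
  ⟨fun x => hasDerivAt_const x c, fun x => hasDerivAt_const x 0, continuous_const⟩

lemma hasSecondDerivs_mul_sub (c b : ℝ) :
    HasSecondDerivs (fun s => c * (b - s)) (fun _ => -c) (fun _ => 0) := by
  refine ⟨fun x => ?_, fun x => hasDerivAt_const x (-c), continuous_const⟩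
  simpa using ((hasDerivAt_id x).const_sub b).const_mul c

lemma hasSecondDerivs_mul_sub_mul_cubic (c b : ℝ) :
    HasSecondDerivs (fun s => c * (b - s) * (4 * s ^ 3 + b ^ 3))
      (fun s => c * (12 * b * s ^ 2 - 16 * s ^ 3 - b ^ 3))
      (fun s => c * (24 * b * s - 48 * s ^ 2)) := by
  refine ⟨fun x => ?_, fun x => ?_, by fun_prop⟩
  · refine ((((hasDerivAt_id x).const_sub b).const_mul c).mul
      (((hasDerivAt_pow 3 x).const_mul 4).add_const (b ^ 3))).congr_deriv ?_
    simp only [id_eq]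
    push_cast
    ring
  · refine (((((hasDerivAt_pow 2 x).const_mul (12 * b)).sub
      ((hasDerivAt_pow 3 x).const_mul 16)).sub_const (b ^ 3)).const_mul c).congr_deriv ?_
    push_cast
    ring

lemma middlePiece_bounds {um s : ℝ} (hum : 0 < um) (hs₀ : 0 ≤ s) (hs₁ : s ≤ um / 2) :
    15 / 8 * um ^ 2 ≤ 5 / (2 * um ^ 2) * (um - s) * (4 * s ^ 3 + um ^ 3) ∧
      5 / (2 * um ^ 2) * (um - s) * (4 * s ^ 3 + um ^ 3) < 15 / 2 * um ^ 2 := by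
  have hc : 0 < 5 / (2 * um ^ 2) := by positivity
  have hs₂ : 4 * s ^ 2 * (um - s) ≤ um ^ 3 := by
    nlinarith [mul_le_mul (mul_le_mul hs₁ hs₁ hs₀ (by linarith)) (by linarith : um - s ≤ um)
      (by linarith) (by positivity)]
  constructor
  · have key : 5 / (2 * um ^ 2) * (um - s) * (4 * s ^ 3 + um ^ 3) - 15 / 8 * um ^ 2
        = 5 / (2 * um ^ 2) * ((um - 2 * s) ^ 3 * (um + 2 * s) / 4) := by
      field_simp
      ring
    nlinarith [mul_nonneg hc.le (div_nonneg (mul_nonneg (pow_nonneg (by linarith : 0 ≤ um - 2 * s) 3)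
      (by linarith : 0 ≤ um + 2 * s)) zero_le_four)]
  · have key : 5 / 2 * um ^ 2 - 5 / (2 * um ^ 2) * (um - s) * (4 * s ^ 3 + um ^ 3)
        = 5 / (2 * um ^ 2) * (s * (um ^ 3 - 4 * s ^ 2 * (um - s))) := by
      field_simp
      ring
    nlinarith [mul_nonneg hc.le (mul_nonneg hs₀ (sub_nonneg.2 hs₂))]

lemma middlePiece_deriv_bounds {um s : ℝ} (hum : 0 < um) (hs₀ : 0 ≤ s) (hs₁ : s ≤ um / 2) :
    -(5 / 2 * um) ≤ 5 / (2 * um ^ 2) * (12 * um * s ^ 2 - 16 * s ^ 3 - um ^ 3) ∧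
      5 / (2 * um ^ 2) * (12 * um * s ^ 2 - 16 * s ^ 3 - um ^ 3) ≤ 0 := by
  have hc : 0 < 5 / (2 * um ^ 2) := by positivity
  constructor
  · have key : 5 / (2 * um ^ 2) * (12 * um * s ^ 2 - 16 * s ^ 3 - um ^ 3) + 5 / 2 * um
        = 5 / (2 * um ^ 2) * (4 * s ^ 2 * (3 * um - 4 * s)) := by
      field_simp
      ring
    nlinarith [mul_nonneg hc.le (mul_nonneg (by positivity : 0 ≤ 4 * s ^ 2)
      (by linarith : 0 ≤ 3 * um - 4 * s))]
  · have key : 5 / (2 * um ^ 2) * (12 * um * s ^ 2 - 16 * s ^ 3 - um ^ 3)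
        = -(5 / (2 * um ^ 2) * ((2 * s - um) ^ 2 * (4 * s + um))) := by
      ring
    nlinarith [mul_nonneg hc.le (mul_nonneg (sq_nonneg (2 * s - um)) (by linarith : 0 ≤ 4 * s + um))]

lemma middlePiece_deriv_deriv_bounds {um s : ℝ} (hum : 0 < um) (hs₀ : 0 ≤ s) (hs₁ : s ≤ um / 2) :
    0 ≤ 5 / (2 * um ^ 2) * (24 * um * s - 48 * s ^ 2) ∧
      5 / (2 * um ^ 2) * (24 * um * s - 48 * s ^ 2) ≤ 15 / 2 := by
  have hc : 0 < 5 / (2 * um ^ 2) := by positivity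
  constructor
  · have key : 24 * um * s - 48 * s ^ 2 = 24 * s * (um - 2 * s) := by ring
    rw [key]
    exact mul_nonneg hc.le (mul_nonneg (by positivity) (by linarith))
  · have key : 15 / 2 - 5 / (2 * um ^ 2) * (24 * um * s - 48 * s ^ 2)
        = 5 / (2 * um ^ 2) * (3 * (um - 4 * s) ^ 2) := by
      field_simp
      ring
    nlinarith [mul_nonneg hc.le (mul_nonneg zero_le_three (sq_nonneg (um - 4 * s)))]

/-- Regularity and bounds for the weight function. -/
theorem weight_regularity
    (um : ℝ) (hum : 0 < um)
    (w : ℝ → ℝ)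
    (hw : ∀ s, w s = if s < 0 then (5 / 2) * um * (um - s)
        else if s < um / 2 then (5 / (2 * um ^ 2)) * (um - s) * (4 * s ^ 3 + um ^ 3)
        else (15 / 8) * um ^ 2) :
    ContDiffOn ℝ 2 w (Set.Ioo (-2 * um) um) ∧
    ∀ s ∈ Set.Ioo (-2 * um) um,
      (15 / 8) * um ^ 2 ≤ w s ∧ w s < (15 / 2) * um ^ 2 ∧
      -((5 / 2) * um) ≤ deriv w s ∧ deriv w s ≤ 0 ∧
      0 ≤ deriv (deriv w) s ∧ deriv (deriv w) s ≤ 15 / 2 := by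
  have hmid := (hasSecondDerivs_mul_sub_mul_cubic (5 / (2 * um ^ 2)) um).ite
    (hasSecondDerivs_const (15 / 8 * um ^ 2)) (a := um / 2)
    (by field_simp; ring) (by ring) (by ring)
  have hweight := (hasSecondDerivs_mul_sub (5 / 2 * um) um).ite hmid (a := 0)
    (by simp [hum]; field_simp) (by simp [hum]; field_simp) (by simp [hum])
  beta_reduce at hweight
  obtain rfl : w = _ := funext hw
  refine ⟨hweight.contDiff.contDiffOn, fun s ⟨hs₁, hs₂⟩ => ?_⟩
  rw [hweight.deriv_deriv_eq, hweight.deriv_eq]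
  beta_reduce
  split_ifs with h₀ h₁
  · exact ⟨by nlinarith, by nlinarith, le_rfl, by linarith, le_rfl, by norm_num⟩
  · obtain ⟨hv₀, hv₁⟩ := middlePiece_bounds hum (not_lt.1 h₀) h₁.le
    obtain ⟨hd₀, hd₁⟩ := middlePiece_deriv_bounds hum (not_lt.1 h₀) h₁.le
    obtain ⟨hdd₀, hdd₁⟩ := middlePiece_deriv_deriv_bounds hum (not_lt.1 h₀) h₁.le
    exact ⟨hv₀, hv₁, hd₀, hd₁, hdd₀, hdd₁⟩
  · exact ⟨le_rfl, by nlinarith, by linarith, le_rfl, le_rfl, by norm_num⟩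
end

section
/- Lower bound on the diffusion coefficient after the weighted Poincaré substitution: For all s ∈ (u_-, u_m/2), 1 − (2/(5u_m)) · w(s) · (u_m/2 − s)/(u_m − s)² > 1/6. In particular, for s ∈ (u_-, 0) the left-hand side equals (u_m/2)/(u_m − s) > 1/6, and for s ∈ [0, u_m/2) it equals (8s⁴ − 4u_m s³ + u_m⁴)/(2u_m³(u_m − s)) > 1/4. -/
/-!
On `(u₋, 0)` the weight is linear and the coefficient collapses to `(u_m/2)/(u_m - s)`, which
exceeds `1/6` because `u_m - s < 3 u_m`. On `[0, u_m/2)` it is the quartic quotient, and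
`2(8s⁴ - 4u_m s³ + u_m⁴) - u_m³(u_m - s) = 16s⁴ + u_m s (u_m² - 8s²) + u_m⁴`
is positive because `8s² < 2u_m²` and `u_m s < u_m²/2` there.
-/

section DiffusionCoefficient

variable {um s : ℝ}

theorem diffusion_coeff_linear_branch (hum : um ≠ 0) (hs : um - s ≠ 0) :
    1 - (2 / (5 * um)) * ((5 / 2) * um * (um - s)) * (um / 2 - s) / (um - s) ^ 2
      = (um / 2) / (um - s) := by
  field_simp
  ring

theorem one_sixth_lt_half_div_sub (hlo : -2 * um < s) (hhi : s < um) :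
    1 / 6 < (um / 2) / (um - s) := by
  rw [lt_div_iff₀ (by linarith)]
  linarith

theorem diffusion_coeff_quartic_branch (hum : um ≠ 0) (hs : um - s ≠ 0) :
    1 - (2 / (5 * um)) * ((5 / (2 * um ^ 2)) * (um - s) * (4 * s ^ 3 + um ^ 3)) * (um / 2 - s)
        / (um - s) ^ 2
      = (8 * s ^ 4 - 4 * um * s ^ 3 + um ^ 4) / (2 * um ^ 3 * (um - s)) := by
  field_simp
  ring

theorem one_quarter_lt_quartic_div (hum : 0 < um) (hlo : 0 ≤ s) (hhi : s < um / 2) :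
    1 / 4 < (8 * s ^ 4 - 4 * um * s ^ 3 + um ^ 4) / (2 * um ^ 3 * (um - s)) := by
  have hsq : 8 * s ^ 2 < 2 * um ^ 2 := by nlinarith
  have hcubic : 8 * um * s ^ 3 ≤ 2 * um ^ 3 * s := by nlinarith [mul_nonneg hum.le hlo]
  have hgap : 0 < um - s := by linarith
  rw [lt_div_iff₀ (by positivity)]
  nlinarith [pow_pos hum 4, pow_nonneg hlo 4, mul_nonneg (pow_nonneg hum.le 3) hlo]

end DiffusionCoefficient

/-- Lower bound on the diffusion coefficient after the weighted Poincaré substitution. -/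
theorem diffusion_coefficient_lower_bound
    (um : ℝ) (hum : 0 < um)
    (w : ℝ → ℝ)
    (hw : ∀ s, w s = if s < 0 then (5 / 2) * um * (um - s)
        else if s < um / 2 then (5 / (2 * um ^ 2)) * (um - s) * (4 * s ^ 3 + um ^ 3)
        else (15 / 8) * um ^ 2) :
    (∀ s : ℝ, -2 * um < s → s < um / 2 →
      1 / 6 < 1 - (2 / (5 * um)) * w s * (um / 2 - s) / (um - s) ^ 2) ∧
    (∀ s : ℝ, -2 * um < s → s < 0 →
      1 - (2 / (5 * um)) * w s * (um / 2 - s) / (um - s) ^ 2 = (um / 2) / (um - s) ∧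
      1 / 6 < (um / 2) / (um - s)) ∧
    (∀ s : ℝ, 0 ≤ s → s < um / 2 →
      1 - (2 / (5 * um)) * w s * (um / 2 - s) / (um - s) ^ 2
        = (8 * s ^ 4 - 4 * um * s ^ 3 + um ^ 4) / (2 * um ^ 3 * (um - s)) ∧
      1 / 4 < (8 * s ^ 4 - 4 * um * s ^ 3 + um ^ 4) / (2 * um ^ 3 * (um - s))) := by
  have linear : ∀ s : ℝ, -2 * um < s → s < 0 →
      1 - (2 / (5 * um)) * w s * (um / 2 - s) / (um - s) ^ 2 = (um / 2) / (um - s) ∧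
      1 / 6 < (um / 2) / (um - s) := fun s hlo hhi => by
    rw [hw s, if_pos hhi]
    exact ⟨diffusion_coeff_linear_branch hum.ne' (by linarith),
      one_sixth_lt_half_div_sub hlo (by linarith)⟩
  have quartic : ∀ s : ℝ, 0 ≤ s → s < um / 2 →
      1 - (2 / (5 * um)) * w s * (um / 2 - s) / (um - s) ^ 2
        = (8 * s ^ 4 - 4 * um * s ^ 3 + um ^ 4) / (2 * um ^ 3 * (um - s)) ∧
      1 / 4 < (8 * s ^ 4 - 4 * um * s ^ 3 + um ^ 4) / (2 * um ^ 3 * (um - s)) :=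
      fun s hlo hhi => by
    rw [hw s, if_neg hlo.not_gt, if_pos hhi]
    exact ⟨diffusion_coeff_quartic_branch hum.ne' (by linarith),
      one_quarter_lt_quartic_div hum hlo hhi⟩
  refine ⟨fun s hlo hhi => ?_, linear, quartic⟩
  rcases lt_or_ge s 0 with hneg | hnonneg
  · obtain ⟨heq, hlt⟩ := linear s hlo hneg
    exact heq ▸ hlt
  · obtain ⟨heq, hlt⟩ := quartic s hnonneg hhi
    linarith
end

section
/- Coercivity of the zeroth-order coefficient in the a-contraction estimate: Fix u_m > 0. For all s ∈ [0, u_m/2), −(1800/u_m⁴)s⁸ + (400/u_m³)s⁷ + (3950/u_m²)s⁶ − (3225/u_m)s⁵ + (775/2)s⁴ + 325 u_m s³ − (75/2)u_m² s² − (25/8)u_m³ s + (25/8)u_m⁴ > 2u_m⁴. Moreover, for all s ∈ (−2u_m, 0), (25/8)u_m³(u_m − s) > 2u_m⁴. -/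
/-!
Both sides are homogeneous of degree four in `(s, u_m)`, so it suffices to treat `u_m = 1`,
i.e. a polynomial `p` in `t = s / u_m`. On `[0, 1/2]` write `p(t) - 2` in the basis
`t ^ k * (1 - 2 t) ^ (8 - k)`: every coefficient is positive, and the `k = 0` term is strictly
positive for `t < 1/2`. The range `s < 0` is linear.
-/

/-- `(H₁ + H₂) / u_m⁴` on `[0, u_m/2)`, as a function of `t = s / u_m`. -/
noncomputable def normalizedCoeff (t : ℝ) : ℝ :=
  -1800 * t ^ 8 + 400 * t ^ 7 + 3950 * t ^ 6 - 3225 * t ^ 5 + 775 / 2 * t ^ 4 + 325 * t ^ 3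
    - 75 / 2 * t ^ 2 - 25 / 8 * t + 25 / 8

lemma normalizedCoeff_sub_two (t : ℝ) :
    normalizedCoeff t - 2 =
      9 / 8 * (1 - 2 * t) ^ 8 + 119 / 8 * t * (1 - 2 * t) ^ 7 + 179 / 4 * t ^ 2 * (1 - 2 * t) ^ 6
        + 233 / 2 * t ^ 3 * (1 - 2 * t) ^ 5 + 3545 / 2 * t ^ 4 * (1 - 2 * t) ^ 4
        + 7141 * t ^ 5 * (1 - 2 * t) ^ 3 + 10816 * t ^ 6 * (1 - 2 * t) ^ 2
        + 8452 * t ^ 7 * (1 - 2 * t) + 3088 * t ^ 8 := by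
  unfold normalizedCoeff
  ring

lemma two_lt_normalizedCoeff {t : ℝ} (ht₀ : 0 ≤ t) (ht : t < 1 / 2) : 2 < normalizedCoeff t := by
  have hv : 0 < 1 - 2 * t := by linarith
  rw [← sub_pos, normalizedCoeff_sub_two]
  generalize 1 - 2 * t = v at hv ⊢
  positivity

lemma H₁_add_H₂_eq_mul_normalizedCoeff {um : ℝ} (hum : um ≠ 0) (s : ℝ) :
    -(1800 / um ^ 4) * s ^ 8 + (400 / um ^ 3) * s ^ 7 + (3950 / um ^ 2) * s ^ 6
        - (3225 / um) * s ^ 5 + (775 / 2) * s ^ 4 + 325 * um * s ^ 3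
        - (75 / 2) * um ^ 2 * s ^ 2 - (25 / 8) * um ^ 3 * s + (25 / 8) * um ^ 4
      = um ^ 4 * normalizedCoeff (s / um) := by
  unfold normalizedCoeff
  field_simp

/-- Coercivity of the zeroth-order coefficient `H₁ + H₂` in the a-contraction estimate. -/
theorem coercivity_H1_add_H2
    (um : ℝ) (hum : 0 < um) :
    (∀ s : ℝ, 0 ≤ s → s < um / 2 →
      2 * um ^ 4 <
        -(1800 / um ^ 4) * s ^ 8 + (400 / um ^ 3) * s ^ 7 + (3950 / um ^ 2) * s ^ 6
          - (3225 / um) * s ^ 5 + (775 / 2) * s ^ 4 + 325 * um * s ^ 3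
          - (75 / 2) * um ^ 2 * s ^ 2 - (25 / 8) * um ^ 3 * s + (25 / 8) * um ^ 4) ∧
    (∀ s : ℝ, -2 * um < s → s < 0 →
      2 * um ^ 4 < (25 / 8) * um ^ 3 * (um - s)) := by
  refine ⟨fun s hs₀ hs => ?_, fun s _ hs => ?_⟩
  · have ht : s / um < 1 / 2 := by rw [div_lt_iff₀ hum]; linarith
    rw [H₁_add_H₂_eq_mul_normalizedCoeff hum.ne']
    have h := two_lt_normalizedCoeff (div_nonneg hs₀ hum.le) ht
    linarith [mul_lt_mul_of_pos_left h (pow_pos hum 4)]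
  · calc 2 * um ^ 4 < 25 / 8 * um ^ 3 * um := by nlinarith [pow_pos hum 4]
      _ < 25 / 8 * um ^ 3 * (um - s) := by gcongr; linarith
end

section
/- Estimate on the expansive part of the shock with the shift term (Lemma 4.4): Let φ : ℝ → ℝ be continuously differentiable with φ and φ′ square-integrable and φ⁴(u^S)′ integrable, and set Ẋ := (32/(25u_m²)) ∫_ℝ φ w(u^S) (u^S)′ dξ. Then ∫_{ξ_*}^{+∞} μ w(u^S) (φ′)² dξ + 3∫_{ξ_*}^{+∞} φ² u^S w(u^S) (u^S)′ dξ + Ẋ ∫_ℝ φ w(u^S) (u^S)′ dξ − (8/(25u_m²)) (∫_{−∞}^{ξ_*} φ w(u^S) (u^S)′ dξ)² − (3/4) ∫_ℝ φ⁴ w′(u^S) (u^S)′ dξ ≥ ∫_{ξ_*}^{+∞} μ w(u^S) (φ′)² dξ + (45/16 − (9/8)·ln 2) u_m³ ∫_{ξ_*}^{+∞} φ² (u^S)′ dξ + (25/64) u_m² Ẋ² + (3/4) ∫_ℝ φ⁴ |w′(u^S)| (u^S)′ dξ. -/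
open MeasureTheory Filter

open Set Topology Real

/-!
The weight is antitone, so `|w'(u^S)| = -w'(u^S)` and the quartic terms cancel, as do the `μ`
terms. Split `∫ φ w(u^S) (u^S)' = I₋ + I₊` at `ξ_*`. Since `Ẋ = 32/(25 u_m²) (I₋ + I₊)` and
`8 I₋² ≤ 16 (I₋ + I₊)² + 16 I₊²`, the shift terms leave only `16/(25 u_m²) I₊²`, which must be
absorbed by `∫_{ξ_*}^∞ H(u^S) (u^S)' φ²` with `H(s) = 45/8 u_m² s - (45/16 - 9/8 log 2) u_m³`
(positive for `s ≥ u_m/2`). On `(ξ_*, ∞)` the weight is the constant `15/8 u_m²`, so the weighted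
Cauchy–Schwarz inequality gives `I₊² ≤ (15/8 u_m²)² ∫ H(u^S) (u^S)' φ² · ∫ (u^S)'/H(u^S)`, and the
substitution `s = u^S` gives `∫_{ξ_*}^∞ (u^S)'/H(u^S) = 8/(45 u_m²) log(1 + 5/(2 log 2))`, which
is at most `4/(9 u_m²)`.
-/

theorem sq_integral_mul_le_integral_mul_integral_div {α : Type*} [MeasurableSpace α]
    {ν : Measure α} {f g ρ : α → ℝ} (hρ : ∀ᵐ x ∂ν, 0 < ρ x)
    (hfg : Integrable (fun x => f x * g x) ν) (hf : Integrable (fun x => ρ x * f x ^ 2) ν)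
    (hg : Integrable (fun x => g x ^ 2 / ρ x) ν) :
    (∫ x, f x * g x ∂ν) ^ 2 ≤ (∫ x, ρ x * f x ^ 2 ∂ν) * ∫ x, g x ^ 2 / ρ x ∂ν := by
  have hquad : ∀ t : ℝ, 0 ≤ (∫ x, ρ x * f x ^ 2 ∂ν) * (t * t)
      + (-2 * ∫ x, f x * g x ∂ν) * t + ∫ x, g x ^ 2 / ρ x ∂ν := by
    intro t
    have hsq : 0 ≤ ∫ x, (t * ρ x * f x - g x) ^ 2 / ρ x ∂ν :=
      integral_nonneg_of_ae (hρ.mono fun x hx => by positivity)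
    have hexpand : (fun x => (t * ρ x * f x - g x) ^ 2 / ρ x) =ᵐ[ν]
        fun x => ρ x * f x ^ 2 * (t * t) + -2 * (f x * g x) * t + g x ^ 2 / ρ x :=
      hρ.mono fun x hx => by field_simp; ring
    have hfg' : Integrable (fun x => ρ x * f x ^ 2 * (t * t) + -2 * (f x * g x) * t) ν :=
      (hf.mul_const _).add ((hfg.const_mul _).mul_const _)
    rwa [integral_congr_ae hexpand, integral_add hfg' hg,
      integral_add (hf.mul_const _) ((hfg.const_mul _).mul_const _), integral_mul_const,
      integral_mul_const, integral_const_mul] at hsq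
  have := discrim_le_zero hquad
  rw [discrim] at this
  nlinarith

theorem MeasureTheory.Integrable.mul_of_integrable_mul_sq {α : Type*} [MeasurableSpace α]
    {ν : Measure α} {φ g : α → ℝ} (hφ : AEStronglyMeasurable φ ν) (hg : Integrable g ν)
    (hgφ : Integrable (fun x => g x * φ x ^ 2) ν) : Integrable (fun x => φ x * g x) ν := by
  refine ((hgφ.norm.add hg.norm).div_const 2).mono' (hφ.mul hg.aestronglyMeasurable) ?_
  refine Eventually.of_forall fun x => ?_
  simp only [Pi.add_apply, norm_mul, Real.norm_eq_abs, abs_pow, sq_abs]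
  rw [← sq_abs (φ x)]
  nlinarith [mul_nonneg (abs_nonneg (g x)) (sq_nonneg (|φ x| - 1))]

theorem integrableOn_Iic_deriv_of_nonneg' {g g' : ℝ → ℝ} {a l : ℝ}
    (hderiv : ∀ x ∈ Iic a, HasDerivAt g (g' x) x) (g'pos : ∀ x ∈ Iic a, 0 ≤ g' x)
    (hg : Tendsto g atBot (𝓝 l)) : IntegrableOn g' (Iic a) := by
  have hcont : ContinuousOn g (Iic a) := fun x hx =>
    (hderiv x hx).continuousAt.continuousWithinAt
  have hint : ∀ x, IntegrableOn g' (Ioc x a) := fun x =>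
    intervalIntegral.integrableOn_deriv_of_nonneg (hcont.mono Icc_subset_Iic_self)
      (fun y hy => hderiv y hy.2.le) fun y hy => g'pos y hy.2.le
  refine integrableOn_Iic_of_intervalIntegral_norm_tendsto (g a - l) a hint tendsto_id ?_
  refine Tendsto.congr' ?_ (tendsto_const_nhds.sub hg)
  filter_upwards [Iic_mem_atBot a] with x hxa
  rw [intervalIntegral.integral_of_le hxa,
    setIntegral_congr_fun measurableSet_Ioc fun y hy => Real.norm_of_nonneg (g'pos y hy.2),
    ← intervalIntegral.integral_of_le hxa,
    intervalIntegral.integral_eq_sub_of_hasDerivAt_of_le hxa (hcont.mono Icc_subset_Iic_self)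
      (fun y hy => hderiv y hy.2.le)
      ((intervalIntegrable_iff_integrableOn_Ioc_of_le hxa).2 (hint x))]

theorem integrable_deriv_of_nonneg {g g' : ℝ → ℝ} {l l' : ℝ}
    (hderiv : ∀ x, HasDerivAt g (g' x) x) (g'pos : ∀ x, 0 ≤ g' x)
    (hbot : Tendsto g atBot (𝓝 l)) (htop : Tendsto g atTop (𝓝 l')) : Integrable g' := by
  rw [← integrableOn_univ, ← Iic_union_Ioi (a := (0 : ℝ))]
  exact (integrableOn_Iic_deriv_of_nonneg' (fun x _ => hderiv x) (fun x _ => g'pos x) hbot).union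
    (integrableOn_Ioi_deriv_of_nonneg' (fun x _ => hderiv x) (fun x _ => g'pos x) htop)

theorem integrableOn_and_integral_Ioi_deriv_div_affine {g g' : ℝ → ℝ} {a b c l : ℝ}
    (ha : 0 < a) (hderiv : ∀ x, HasDerivAt g (g' x) x) (g'pos : ∀ x, 0 ≤ g' x)
    (hc : 0 < a * g c - b) (hg : Tendsto g atTop (𝓝 l)) :
    IntegrableOn (fun x => g' x / (a * g x - b)) (Ioi c) ∧
      ∫ x in Ioi c, g' x / (a * g x - b) = (log (a * l - b) - log (a * g c - b)) / a := by
  have hmono : Monotone g := monotone_of_deriv_nonneg (fun x => (hderiv x).differentiableAt)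
    fun x => (hderiv x).deriv ▸ g'pos x
  have hpos : ∀ x ∈ Ici c, 0 < a * g x - b := fun x hx => by
    nlinarith [hmono (mem_Ici.mp hx)]
  have hl : 0 < a * l - b := by
    have : g c ≤ l := ge_of_tendsto hg (eventually_atTop.2 ⟨c, fun x hx => hmono hx⟩)
    nlinarith
  have hF : ∀ x ∈ Ici c, HasDerivAt (fun x => log (a * g x - b) / a) (g' x / (a * g x - b)) x :=
    fun x hx => by
      refine ((((hderiv x).const_mul a).sub_const b).log (hpos x hx).ne').div_const a
        |>.congr_deriv ?_
      field_simp
  have hlim : Tendsto (fun x => log (a * g x - b) / a) atTop (𝓝 (log (a * l - b) / a)) :=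
    ((continuousAt_log hl.ne').tendsto.comp ((hg.const_mul a).sub_const b)).div_const a
  have hnn : ∀ x ∈ Ioi c, 0 ≤ g' x / (a * g x - b) := fun x hx =>
    div_nonneg (g'pos x) (hpos x (mem_Ici_of_Ioi hx)).le
  refine ⟨integrableOn_Ioi_deriv_of_nonneg' hF hnn hlim, ?_⟩
  rw [integral_Ioi_of_hasDerivAt_of_nonneg' hF hnn hlim, sub_div]

noncomputable def shockWeight (um s : ℝ) : ℝ :=
  if s < 0 then (5 / 2) * um * (um - s)
  else if s < um / 2 then (5 / (2 * um ^ 2)) * (um - s) * (4 * s ^ 3 + um ^ 3)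
  else (15 / 8) * um ^ 2

theorem shockWeight_of_le {um s : ℝ} (hum : 0 ≤ um) (hs : um / 2 ≤ s) :
    shockWeight um s = 15 / 8 * um ^ 2 := by
  rw [shockWeight, if_neg (by linarith), if_neg hs.not_gt]

theorem antitoneOn_shockWeight_cubic {um : ℝ} :
    AntitoneOn (fun s => (um - s) * (4 * s ^ 3 + um ^ 3)) (Icc 0 (um / 2)) := by
  intro s hs t ht hst
  have hts := sub_nonneg.2 hst
  have ht2 := sub_nonneg.2 ht.2
  -- with `p s = (um - s) (4 s³ + um³)`, `p s - p t = (t - s) Q` and `Q` is the mean over `[s, t]`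
  -- of `-p' x = (um - 2x)² (um + 4x) ≥ 0`
  have hQ : 0 ≤ um ^ 3 - 4 * um * (s ^ 2 + s * t + t ^ 2) + 4 * (s + t) * (s ^ 2 + t ^ 2) := by
    nlinarith [mul_nonneg (mul_nonneg hts ht2) hs.1, mul_nonneg (mul_nonneg ht2 ht2) hs.1,
      mul_nonneg (mul_nonneg hts hts) hs.1, mul_nonneg (mul_nonneg hts ht2) ht2,
      mul_nonneg (mul_nonneg hts hts) ht2, mul_nonneg (mul_nonneg ht2 ht2) ht2,
      mul_nonneg (mul_nonneg hts hts) hts, mul_nonneg (mul_nonneg hs.1 hs.1) ht2,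
      mul_nonneg (mul_nonneg hs.1 hs.1) hts, mul_nonneg (mul_nonneg hs.1 hs.1) hs.1,
      mul_nonneg (mul_nonneg hts ht2) hts]
  nlinarith [mul_nonneg hts hQ]

theorem antitone_shockWeight {um : ℝ} (hum : 0 < um) : Antitone (shockWeight um) := by
  have hc : 0 < 5 / (2 * um ^ 2) := by positivity
  have hcubic : ∀ {s t}, s ∈ Icc 0 (um / 2) → t ∈ Icc 0 (um / 2) → s ≤ t →
      5 / (2 * um ^ 2) * (um - t) * (4 * t ^ 3 + um ^ 3)
        ≤ 5 / (2 * um ^ 2) * (um - s) * (4 * s ^ 3 + um ^ 3) := fun hs ht hst => by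
    simpa only [mul_assoc] using
      mul_le_mul_of_nonneg_left (antitoneOn_shockWeight_cubic hs ht hst) hc.le
  have hzero : 5 / (2 * um ^ 2) * (um - 0) * (4 * 0 ^ 3 + um ^ 3) = 5 / 2 * um ^ 2 := by
    field_simp; ring
  have hhalf :
      5 / (2 * um ^ 2) * (um - um / 2) * (4 * (um / 2) ^ 3 + um ^ 3) = 15 / 8 * um ^ 2 := by
    field_simp; ring
  intro s t hst
  rcases lt_or_ge s 0 with hs | hs
  · unfold shockWeight
    rw [if_pos hs]
    rcases lt_or_ge t 0 with ht | ht
    · rw [if_pos ht]; nlinarith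
    rw [if_neg ht.not_gt]
    split_ifs with ht'
    · nlinarith [hcubic ⟨le_rfl, by linarith⟩ ⟨ht, ht'.le⟩ ht]
    · nlinarith
  rcases lt_or_ge s (um / 2) with hs' | hs'
  · unfold shockWeight
    rw [if_neg hs.not_gt, if_pos hs', if_neg (hs.trans hst).not_gt]
    split_ifs with ht'
    · exact hcubic ⟨hs, hs'.le⟩ ⟨hs.trans hst, ht'.le⟩ hst
    · linarith [hcubic ⟨hs, hs'.le⟩ ⟨by linarith, le_rfl⟩ hs'.le]
  · rw [shockWeight_of_le hum.le hs', shockWeight_of_le hum.le (hs'.trans hst)]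

/-- On `ξ > ξ_*`, where the weight is `15/8 u_m²`, this is the coefficient
`3 s w(s) - (45/16 - 9/8 log 2) u_m³` of `φ² (u^S)'` in the good terms. -/
noncomputable def expansiveCoeff (um s : ℝ) : ℝ :=
  45 / 8 * um ^ 2 * s - (45 / 16 - 9 / 8 * log 2) * um ^ 3

theorem expansiveCoeff_pos {um s : ℝ} (hum : 0 < um) (hs : um / 2 ≤ s) :
    0 < expansiveCoeff um s := by
  have : 0 < 9 / 8 * log 2 * um ^ 3 := by positivity
  unfold expansiveCoeff
  nlinarith [mul_le_mul_of_nonneg_left hs (by positivity : (0 : ℝ) ≤ 45 / 8 * um ^ 2)]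

theorem monotone_expansiveCoeff (um : ℝ) : Monotone (expansiveCoeff um) := fun x y hxy => by
  unfold expansiveCoeff
  nlinarith [mul_le_mul_of_nonneg_left hxy (by positivity : (0 : ℝ) ≤ 45 / 8 * um ^ 2)]

theorem log_sub_log_expansiveCoeff_le {um : ℝ} (hum : 0 < um) :
    log (expansiveCoeff um um) - log (expansiveCoeff um (um / 2)) ≤ 5 / 2 := by
  have hlog2 := log_two_gt_d9
  have htop : expansiveCoeff um um = (45 / 16 + 9 / 8 * log 2) * um ^ 3 := by
    unfold expansiveCoeff; ring
  have hhalf : expansiveCoeff um (um / 2) = 9 / 8 * log 2 * um ^ 3 := by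
    unfold expansiveCoeff; ring
  have hpos : 0 < 9 / 8 * log 2 * um ^ 3 := by positivity
  rw [htop, hhalf, ← log_div (by positivity) hpos.ne', log_le_iff_le_exp (by positivity),
    div_le_iff₀ hpos]
  -- the ratio is `1 + 5 / (2 log 2) < 4.7 < 1 + 5/2 + (5/2)²/2 ≤ exp (5/2)`
  have hexp := quadratic_le_exp_of_nonneg (x := 5 / 2) (by norm_num)
  nlinarith [mul_pos (by linarith : (0 : ℝ) < log 2 - 0.69) (pow_pos hum 3)]

structure IsOleinikProfile (μ uminus um : ℝ) (uS : ℝ → ℝ) : Prop where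
  contDiff : ContDiff ℝ 1 uS
  mem_Ioo : ∀ ξ, uS ξ ∈ Ioo uminus um
  ode : ∀ ξ, μ * deriv uS ξ = (uS ξ - uminus) * (uS ξ - um) ^ 2
  tendsto_atBot : Tendsto uS atBot (𝓝 uminus)
  tendsto_atTop : Tendsto uS atTop (𝓝 um)

namespace IsOleinikProfile

variable {μ uminus um ξs : ℝ} {uS φ : ℝ → ℝ}

theorem hasDerivAt (hP : IsOleinikProfile μ uminus um uS) (ξ : ℝ) :
    HasDerivAt uS (deriv uS ξ) ξ :=
  (hP.contDiff.differentiable one_ne_zero ξ).hasDerivAt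

theorem deriv_pos (hP : IsOleinikProfile μ uminus um uS) (hμ : 0 < μ) (ξ : ℝ) :
    0 < deriv uS ξ := by
  obtain ⟨h₁, h₂⟩ := hP.mem_Ioo ξ
  have : 0 < μ * deriv uS ξ := hP.ode ξ ▸ mul_pos (by linarith) (by nlinarith)
  exact pos_of_mul_pos_right this hμ.le

theorem deriv_le (hP : IsOleinikProfile μ uminus um uS) (hμ : 0 < μ) (ξ : ℝ) :
    deriv uS ξ ≤ (um - uminus) ^ 3 / μ := by
  obtain ⟨h₁, h₂⟩ := hP.mem_Ioo ξ
  rw [le_div_iff₀ hμ, mul_comm, hP.ode ξ]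
  calc (uS ξ - uminus) * (uS ξ - um) ^ 2 ≤ (um - uminus) * (um - uminus) ^ 2 :=
        mul_le_mul (by linarith) (by nlinarith) (sq_nonneg _) (by linarith)
    _ = (um - uminus) ^ 3 := by ring

theorem half_le_of_mem_Ioi (hP : IsOleinikProfile μ uminus um uS) (hμ : 0 < μ)
    (hξs : uS ξs = um / 2) {ξ : ℝ} (hξ : ξ ∈ Ioi ξs) : um / 2 ≤ uS ξ :=
  hξs ▸ (strictMono_of_deriv_pos (hP.deriv_pos hμ)).monotone hξ.out.le

theorem integrable_deriv (hP : IsOleinikProfile μ uminus um uS) (hμ : 0 < μ) :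
    Integrable (deriv uS) :=
  integrable_deriv_of_nonneg hP.hasDerivAt (fun ξ => (hP.deriv_pos hμ ξ).le)
    hP.tendsto_atBot hP.tendsto_atTop

theorem integrable_comp_mul_deriv (hP : IsOleinikProfile μ uminus um uS) (hμ : 0 < μ)
    {F : ℝ → ℝ} (hF : Measurable F) {C : ℝ} (hC : ∀ s ∈ Ioo uminus um, |F s| ≤ C) :
    Integrable (fun ξ => F (uS ξ) * deriv uS ξ) :=
  (hP.integrable_deriv hμ).bdd_mul
    (hF.comp hP.contDiff.continuous.measurable).aestronglyMeasurable
    (Eventually.of_forall fun ξ => hC _ (hP.mem_Ioo ξ))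

theorem integrable_comp_mul_deriv_mul_sq (hP : IsOleinikProfile μ uminus um uS) (hμ : 0 < μ)
    {F : ℝ → ℝ} (hF : Measurable F) {C : ℝ} (hC : ∀ s ∈ Ioo uminus um, |F s| ≤ C)
    (hφ2 : Integrable (fun ξ => φ ξ ^ 2)) :
    Integrable (fun ξ => F (uS ξ) * deriv uS ξ * φ ξ ^ 2) := by
  refine hφ2.bdd_mul (c := C * ((um - uminus) ^ 3 / μ)) ?_ (Eventually.of_forall fun ξ => ?_)
  · exact ((hF.comp hP.contDiff.continuous.measurable).mul
      (hP.contDiff.continuous_deriv le_rfl).measurable).aestronglyMeasurable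
  · rw [norm_mul, Real.norm_eq_abs, Real.norm_of_nonneg (hP.deriv_pos hμ ξ).le]
    exact mul_le_mul (hC _ (hP.mem_Ioo ξ)) (hP.deriv_le hμ ξ) (hP.deriv_pos hμ ξ).le
      ((abs_nonneg _).trans (hC _ (hP.mem_Ioo ξ)))

theorem integrable_mul_comp_mul_deriv (hP : IsOleinikProfile μ uminus um uS) (hμ : 0 < μ)
    {F : ℝ → ℝ} (hF : Measurable F) {C : ℝ} (hC : ∀ s ∈ Ioo uminus um, |F s| ≤ C)
    (hφ : Continuous φ) (hφ2 : Integrable (fun ξ => φ ξ ^ 2)) :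
    Integrable (fun ξ => φ ξ * (F (uS ξ) * deriv uS ξ)) :=
  (hP.integrable_comp_mul_deriv hμ hF hC).mul_of_integrable_mul_sq hφ.aestronglyMeasurable
    (hP.integrable_comp_mul_deriv_mul_sq hμ hF hC hφ2)

theorem integrable_expansiveCoeff_mul_deriv_mul_sq (hP : IsOleinikProfile μ uminus um uS)
    (hμ : 0 < μ) (hφ2 : Integrable (fun ξ => φ ξ ^ 2)) :
    Integrable (fun ξ => expansiveCoeff um (uS ξ) * deriv uS ξ * φ ξ ^ 2) :=
  hP.integrable_comp_mul_deriv_mul_sq hμ (monotone_expansiveCoeff um).measurable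
    (fun _ hs => abs_le_max_abs_abs (monotone_expansiveCoeff um hs.1.le)
      (monotone_expansiveCoeff um hs.2.le)) hφ2

theorem integrable_mul_shockWeight_mul_deriv (hP : IsOleinikProfile μ uminus um uS)
    (hμ : 0 < μ) (hum : 0 < um) (hφ : Continuous φ) (hφ2 : Integrable (fun ξ => φ ξ ^ 2)) :
    Integrable (fun ξ => φ ξ * shockWeight um (uS ξ) * deriv uS ξ) := by
  have hw := antitone_shockWeight hum
  have hbound : ∀ s ∈ Ioo uminus um, |shockWeight um s| ≤ shockWeight um uminus :=
    fun s hs => by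
      have : 0 ≤ shockWeight um um := by rw [shockWeight_of_le hum.le (by linarith)]; positivity
      rw [abs_of_nonneg (this.trans (hw hs.2.le))]
      exact hw hs.1.le
  exact (hP.integrable_mul_comp_mul_deriv hμ hw.measurable hbound hφ hφ2).congr
    (Eventually.of_forall fun ξ => by ring)

theorem integrableOn_and_integral_Ioi_deriv_div_expansiveCoeff_le
    (hP : IsOleinikProfile μ uminus um uS) (hμ : 0 < μ) (hum : 0 < um) (hξs : uS ξs = um / 2) :
    IntegrableOn (fun ξ => deriv uS ξ / expansiveCoeff um (uS ξ)) (Ioi ξs) ∧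
      ∫ ξ in Ioi ξs, deriv uS ξ / expansiveCoeff um (uS ξ) ≤ 4 / (9 * um ^ 2) := by
  have ha : 0 < 45 / 8 * um ^ 2 := by positivity
  obtain ⟨hint, heq⟩ := integrableOn_and_integral_Ioi_deriv_div_affine ha hP.hasDerivAt
    (fun ξ => (hP.deriv_pos hμ ξ).le) (hξs ▸ expansiveCoeff_pos hum le_rfl) hP.tendsto_atTop
  refine ⟨hint, ?_⟩
  have heq' : ∫ ξ in Ioi ξs, deriv uS ξ / expansiveCoeff um (uS ξ)
      = (log (expansiveCoeff um um) - log (expansiveCoeff um (uS ξs))) / (45 / 8 * um ^ 2) :=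
    heq
  rw [heq', hξs, div_le_iff₀ ha]
  calc _ ≤ 5 / 2 := log_sub_log_expansiveCoeff_le hum
    _ = 4 / (9 * um ^ 2) * (45 / 8 * um ^ 2) := by field_simp; norm_num

theorem sq_setIntegral_Ioi_le (hP : IsOleinikProfile μ uminus um uS) (hμ : 0 < μ)
    (hum : 0 < um) (hξs : uS ξs = um / 2) (hφ : Continuous φ)
    (hφ2 : Integrable (fun ξ => φ ξ ^ 2)) :
    (∫ ξ in Ioi ξs, φ ξ * shockWeight um (uS ξ) * deriv uS ξ) ^ 2
      ≤ 25 / 16 * um ^ 2 *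
        ∫ ξ in Ioi ξs, expansiveCoeff um (uS ξ) * deriv uS ξ * φ ξ ^ 2 := by
  set A := ∫ ξ in Ioi ξs, expansiveCoeff um (uS ξ) * deriv uS ξ * φ ξ ^ 2
  have hH : ∀ ξ ∈ Ioi ξs, 0 < expansiveCoeff um (uS ξ) := fun ξ hξ =>
    expansiveCoeff_pos hum (hP.half_le_of_mem_Ioi hμ hξs hξ)
  obtain ⟨hint, hle⟩ := hP.integrableOn_and_integral_Ioi_deriv_div_expansiveCoeff_le hμ hum hξs
  have hdiv : EqOn (fun ξ => deriv uS ξ / expansiveCoeff um (uS ξ))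
      (fun ξ => deriv uS ξ ^ 2 / (expansiveCoeff um (uS ξ) * deriv uS ξ)) (Ioi ξs) :=
    fun ξ _ => by have := (hP.deriv_pos hμ ξ).ne'; field_simp
  have hφd : Integrable (fun ξ => φ ξ * deriv uS ξ) := by
    simpa only [one_mul] using hP.integrable_mul_comp_mul_deriv hμ (F := fun _ => 1)
      measurable_const (fun _ _ => abs_one.le) hφ hφ2
  have hCS := sq_integral_mul_le_integral_mul_integral_div
    (ae_restrict_of_forall_mem measurableSet_Ioi fun ξ hξ =>
      mul_pos (hH ξ hξ) (hP.deriv_pos hμ ξ))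
    hφd.integrableOn (hP.integrable_expansiveCoeff_mul_deriv_mul_sq hμ hφ2).integrableOn
    (hint.congr_fun hdiv measurableSet_Ioi)
  rw [← setIntegral_congr_fun measurableSet_Ioi hdiv] at hCS
  have hIoi : ∫ ξ in Ioi ξs, φ ξ * shockWeight um (uS ξ) * deriv uS ξ
      = 15 / 8 * um ^ 2 * ∫ ξ in Ioi ξs, φ ξ * deriv uS ξ := by
    rw [← integral_const_mul]
    refine setIntegral_congr_fun measurableSet_Ioi fun ξ hξ => ?_
    simp only [shockWeight_of_le hum.le (hP.half_le_of_mem_Ioi hμ hξs hξ)]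
    ring
  have hA : 0 ≤ A := setIntegral_nonneg measurableSet_Ioi fun ξ hξ =>
    mul_nonneg (mul_pos (hH ξ hξ) (hP.deriv_pos hμ ξ)).le (sq_nonneg _)
  rw [hIoi]
  calc (15 / 8 * um ^ 2 * ∫ ξ in Ioi ξs, φ ξ * deriv uS ξ) ^ 2
      ≤ 225 / 64 * um ^ 4 * (A * (4 / (9 * um ^ 2))) := by
        rw [mul_pow, show (15 / 8 * um ^ 2) ^ 2 = 225 / 64 * um ^ 4 by ring]
        gcongr
        exact hCS.trans (mul_le_mul_of_nonneg_left hle hA)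
    _ = 25 / 16 * um ^ 2 * A := by field_simp; ring

theorem setIntegral_Ioi_eq_expansiveCoeff (hP : IsOleinikProfile μ uminus um uS) (hμ : 0 < μ)
    (hum : 0 < um) (hξs : uS ξs = um / 2) (hφ2 : Integrable (fun ξ => φ ξ ^ 2)) :
    3 * (∫ ξ in Ioi ξs, φ ξ ^ 2 * uS ξ * shockWeight um (uS ξ) * deriv uS ξ)
      - (45 / 16 - 9 / 8 * log 2) * um ^ 3 * (∫ ξ in Ioi ξs, φ ξ ^ 2 * deriv uS ξ)
      = ∫ ξ in Ioi ξs, expansiveCoeff um (uS ξ) * deriv uS ξ * φ ξ ^ 2 := by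
  set K := (45 / 16 - 9 / 8 * log 2) * um ^ 3
  have hJ : Integrable (fun ξ => φ ξ ^ 2 * deriv uS ξ) :=
    (hP.integrable_comp_mul_deriv_mul_sq hμ (F := fun _ => 1) measurable_const
      (fun _ _ => abs_one.le) hφ2).congr (Eventually.of_forall fun ξ => by ring)
  have hT : EqOn (fun ξ => φ ξ ^ 2 * uS ξ * shockWeight um (uS ξ) * deriv uS ξ)
      (fun ξ => (expansiveCoeff um (uS ξ) * deriv uS ξ * φ ξ ^ 2
        + K * (φ ξ ^ 2 * deriv uS ξ)) / 3) (Ioi ξs) := fun ξ hξ => by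
    simp only [shockWeight_of_le hum.le (hP.half_le_of_mem_Ioi hμ hξs hξ), expansiveCoeff, K]
    ring
  rw [setIntegral_congr_fun measurableSet_Ioi hT, integral_div,
    integral_add (hP.integrable_expansiveCoeff_mul_deriv_mul_sq hμ hφ2).integrableOn
      (hJ.integrableOn.const_mul K), integral_const_mul]
  ring

end IsOleinikProfile

theorem shift_term_bound {um Im Ip A : ℝ} (hum : 0 < um) (hIp : Ip ^ 2 ≤ 25 / 16 * um ^ 2 * A) :
    25 / 64 * um ^ 2 * (32 / (25 * um ^ 2) * (Im + Ip)) ^ 2 + 8 / (25 * um ^ 2) * Im ^ 2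
      ≤ 32 / (25 * um ^ 2) * (Im + Ip) * (Im + Ip) + A := by
  have hA : 16 / (25 * um ^ 2) * Ip ^ 2 ≤ A := by
    calc 16 / (25 * um ^ 2) * Ip ^ 2 ≤ 16 / (25 * um ^ 2) * (25 / 16 * um ^ 2 * A) := by gcongr
      _ = A := by field_simp
  have hsq :
      25 / 64 * um ^ 2 * (32 / (25 * um ^ 2) * (Im + Ip)) ^ 2 + 8 / (25 * um ^ 2) * Im ^ 2
        = 32 / (25 * um ^ 2) * (Im + Ip) * (Im + Ip) + 16 / (25 * um ^ 2) * Ip ^ 2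
          - 8 / (25 * um ^ 2) * (Im + 2 * Ip) ^ 2 := by
    field_simp; ring
  have : 0 ≤ 8 / (25 * um ^ 2) * (Im + 2 * Ip) ^ 2 := by positivity
  linarith

theorem expansive_part_estimate_general
    (μ uminus um : ℝ) (hμ : 0 < μ) (huminus : uminus < 0)
    (hum : um = -uminus / 2)
    (uS : ℝ → ℝ) (huS : ContDiff ℝ 1 uS)
    (hrange : ∀ ξ, uS ξ ∈ Set.Ioo uminus um)
    (hODE : ∀ ξ, μ * deriv uS ξ = (uS ξ - uminus) * (uS ξ - um) ^ 2)
    (hbot : Tendsto uS atBot (nhds uminus))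
    (htop : Tendsto uS atTop (nhds um))
    (w : ℝ → ℝ)
    (hw : ∀ s, w s = if s < 0 then (5 / 2) * um * (um - s)
        else if s < um / 2 then (5 / (2 * um ^ 2)) * (um - s) * (4 * s ^ 3 + um ^ 3)
        else (15 / 8) * um ^ 2)
    (ξs : ℝ) (hξs : uS ξs = um / 2)
    (φ : ℝ → ℝ) (hφ : ContDiff ℝ 1 φ)
    (hφ2 : Integrable (fun ξ => (φ ξ) ^ 2))
    (Xdot : ℝ)
    (hX : Xdot = (32 / (25 * um ^ 2)) * ∫ ξ, φ ξ * w (uS ξ) * deriv uS ξ) :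
    (∫ ξ in Set.Ioi ξs, μ * w (uS ξ) * (deriv φ ξ) ^ 2)
      + (45 / 16 - (9 / 8) * Real.log 2) * um ^ 3 * (∫ ξ in Set.Ioi ξs, (φ ξ) ^ 2 * deriv uS ξ)
      + (25 / 64) * um ^ 2 * Xdot ^ 2
      + (3 / 4) * (∫ ξ, (φ ξ) ^ 4 * |deriv w (uS ξ)| * deriv uS ξ)
    ≤ (∫ ξ in Set.Ioi ξs, μ * w (uS ξ) * (deriv φ ξ) ^ 2)
      + 3 * (∫ ξ in Set.Ioi ξs, (φ ξ) ^ 2 * uS ξ * w (uS ξ) * deriv uS ξ)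
      + Xdot * (∫ ξ, φ ξ * w (uS ξ) * deriv uS ξ)
      - (8 / (25 * um ^ 2)) * (∫ ξ in Set.Iio ξs, φ ξ * w (uS ξ) * deriv uS ξ) ^ 2
      - (3 / 4) * (∫ ξ, (φ ξ) ^ 4 * deriv w (uS ξ) * deriv uS ξ) := by
  have hu : 0 < um := by linarith
  have hP : IsOleinikProfile μ uminus um uS := ⟨huS, hrange, hODE, hbot, htop⟩
  obtain rfl : w = shockWeight um := funext hw
  have hint := hP.integrable_mul_shockWeight_mul_deriv hμ hu hφ.continuous hφ2
  have hsplit : ∫ ξ, φ ξ * shockWeight um (uS ξ) * deriv uS ξ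
      = (∫ ξ in Iio ξs, φ ξ * shockWeight um (uS ξ) * deriv uS ξ)
        + ∫ ξ in Ioi ξs, φ ξ * shockWeight um (uS ξ) * deriv uS ξ := by
    rw [← integral_Iic_eq_integral_Iio,
      intervalIntegral.integral_Iic_add_Ioi hint.integrableOn hint.integrableOn]
  have habs : ∫ ξ, φ ξ ^ 4 * |deriv (shockWeight um) (uS ξ)| * deriv uS ξ
      = -∫ ξ, φ ξ ^ 4 * deriv (shockWeight um) (uS ξ) * deriv uS ξ := by
    rw [← integral_neg]
    congr 1 with ξ
    rw [abs_of_nonpos (antitone_shockWeight hu).deriv_nonpos]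
    ring
  have hshift := shift_term_bound
    (Im := ∫ ξ in Iio ξs, φ ξ * shockWeight um (uS ξ) * deriv uS ξ) hu
    (hP.sq_setIntegral_Ioi_le hμ hu hξs hφ.continuous hφ2)
  rw [← hP.setIntegral_Ioi_eq_expansiveCoeff hμ hu hξs hφ2, ← hsplit] at hshift
  rw [habs, hX]
  linarith

/-- Estimate on the expansive part of the shock with the shift term (Lemma 4.4). -/
theorem expansive_part_estimate
    (μ uminus um σ : ℝ) (hμ : 0 < μ) (huminus : uminus < 0)
    (hum : um = -uminus / 2) (hσ : σ = 3 * um ^ 2)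
    (uS : ℝ → ℝ) (huS : ContDiff ℝ 1 uS)
    (hrange : ∀ ξ, uS ξ ∈ Set.Ioo uminus um)
    (hODE : ∀ ξ, μ * deriv uS ξ = (uS ξ - uminus) * (uS ξ - um) ^ 2)
    (hbot : Tendsto uS atBot (nhds uminus))
    (htop : Tendsto uS atTop (nhds um))
    (w : ℝ → ℝ)
    (hw : ∀ s, w s = if s < 0 then (5 / 2) * um * (um - s)
        else if s < um / 2 then (5 / (2 * um ^ 2)) * (um - s) * (4 * s ^ 3 + um ^ 3)
        else (15 / 8) * um ^ 2)
    (ξs : ℝ) (hξs : uS ξs = um / 2)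
    (φ : ℝ → ℝ) (hφ : ContDiff ℝ 1 φ)
    (hφ2 : Integrable (fun ξ => (φ ξ) ^ 2))
    (hφ'2 : Integrable (fun ξ => (deriv φ ξ) ^ 2))
    (hφ4 : Integrable (fun ξ => (φ ξ) ^ 4 * deriv uS ξ))
    (Xdot : ℝ)
    (hX : Xdot = (32 / (25 * um ^ 2)) * ∫ ξ, φ ξ * w (uS ξ) * deriv uS ξ) :
    (∫ ξ in Set.Ioi ξs, μ * w (uS ξ) * (deriv φ ξ) ^ 2)
      + (45 / 16 - (9 / 8) * Real.log 2) * um ^ 3 * (∫ ξ in Set.Ioi ξs, (φ ξ) ^ 2 * deriv uS ξ)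
      + (25 / 64) * um ^ 2 * Xdot ^ 2
      + (3 / 4) * (∫ ξ, (φ ξ) ^ 4 * |deriv w (uS ξ)| * deriv uS ξ)
    ≤ (∫ ξ in Set.Ioi ξs, μ * w (uS ξ) * (deriv φ ξ) ^ 2)
      + 3 * (∫ ξ in Set.Ioi ξs, (φ ξ) ^ 2 * uS ξ * w (uS ξ) * deriv uS ξ)
      + Xdot * (∫ ξ, φ ξ * w (uS ξ) * deriv uS ξ)
      - (8 / (25 * um ^ 2)) * (∫ ξ in Set.Iio ξs, φ ξ * w (uS ξ) * deriv uS ξ) ^ 2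
      - (3 / 4) * (∫ ξ, (φ ξ) ^ 4 * deriv w (uS ξ) * deriv uS ξ) :=
  expansive_part_estimate_general μ uminus um hμ huminus hum uS huS hrange hODE hbot htop w hw ξs
    hξs φ hφ hφ2 Xdot hX
end
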